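/- Let G be a finite simple graph and let M be a matching of G. Let N be the set of vertices incident to some edge of M, and let N' be the set of vertices not in N all of whose neighbors are in N. Let H be the induced subgraph of G on the vertices not in N ∪ N'. If M' is a maximal matching of H, then M ∪ M' is a maximal matching of G. -/
import Mathlib


/-- A matching of `G` is a set of edges of `G`, no two of which share an endpoint. -/
def IsMatching {V : Type*} (G : SimpleGraph V) (M : Set (Sym2 V)) : Prop :=
  M ⊆ G.edgeSet ∧ ∀ e ∈ M, ∀ f ∈ M, e ≠ f → ∀ v : V, v ∈ e → v ∉ f

/-- A maximal matching is a matching not properly contained in any other matching. -/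
def IsMaxMatching {V : Type*} (G : SimpleGraph V) (M : Set (Sym2 V)) : Prop :=
  IsMatching G M ∧ ∀ M' : Set (Sym2 V), IsMatching G M' → M ⊆ M' → M = M'

/-- Let `M` be a matching of a finite simple graph `G`, let `N` be the
set of vertices incident to some edge of `M`, let `N'` be the set of vertices not in
`N` all of whose neighbors are in `N`, and let `H` be the subgraph induced on the
complement of `N ∪ N'`.  If `M'` is a maximal matching of `H`, then `M ∪ M'` is a
maximal matching of `G`. -/
theorem stmt11 {V : Type*} [Fintype V] (G : SimpleGraph V)
    (M : Set (Sym2 V)) (hM : IsMatching G M)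
    (N : Set V) (hN : N = {v | ∃ e ∈ M, v ∈ e})
    (N' : Set V) (hN' : N' = {v | v ∉ N ∧ ∀ u : V, G.Adj v u → u ∈ N})
    (W : Set V) (hW : W = (N ∪ N')ᶜ)
    (M' : Set (Sym2 ↥W)) (hM' : IsMaxMatching (G.induce W) M') :
    IsMaxMatching G (M ∪ (Sym2.map Subtype.val '' M')) := by

  obtain ⟨⟨hM'sub, hM'dis⟩, hM'max⟩ := hM'
  obtain ⟨hMsub, hMdis⟩ := hM
  have hMvert : ∀ e ∈ M, ∀ v, v ∈ e → v ∈ N := by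
    intro e he v hv; rw [hN]; exact ⟨e, he, hv⟩
  have hImgVert : ∀ e ∈ (Sym2.map (Subtype.val : W → V) '' M'), ∀ v, v ∈ e → v ∈ W := by
    rintro _ ⟨f, hf, rfl⟩ v hv
    rw [Sym2.mem_map] at hv
    obtain ⟨w, hw, rfl⟩ := hv
    exact w.2
  have hWnotN : ∀ v ∈ W, v ∉ N := by
    intro v hv; rw [hW] at hv; intro h; exact hv (Or.inl h)
  have hImgEdge : ∀ e ∈ (Sym2.map (Subtype.val : W → V) '' M'), e ∈ G.edgeSet := by
    rintro _ ⟨f, hf, rfl⟩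
    have hadj := hM'sub hf
    induction f using Sym2.ind with
    | _ a b =>
      rw [Sym2.map_pair_eq, SimpleGraph.mem_edgeSet]
      exact hadj
  have hmatch : IsMatching G (M ∪ (Sym2.map Subtype.val '' M')) := by
    constructor
    · rintro e (he | he)
      · exact hMsub he
      · exact hImgEdge e he
    · rintro e (he | he) f (hf | hf) hef v hv
      · exact hMdis e he f hf hef v hv
      · intro hvf
        exact hWnotN v (hImgVert f hf v hvf) (hMvert e he v hv)
      · intro hvf
        exact hWnotN v (hImgVert e he v hv) (hMvert f hf v hvf)
      · obtain ⟨e0, he0, rfl⟩ := he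
        obtain ⟨f0, hf0, rfl⟩ := hf
        have hne : e0 ≠ f0 := fun h => hef (by rw [h])
        rw [Sym2.mem_map] at hv
        obtain ⟨w, hw, rfl⟩ := hv
        intro hvf
        rw [Sym2.mem_map] at hvf
        obtain ⟨w', hw', hww⟩ := hvf
        have : w' = w := Subtype.ext hww
        subst this
        exact hM'dis e0 he0 f0 hf0 hne w' hw hw'
  refine ⟨hmatch, ?_⟩
  intro M'' hM'' hsub
  obtain ⟨hsub'', hdis''⟩ := hM''
  refine Set.Subset.antisymm hsub ?_
  intro e he
  by_contra hne
  -- each vertex of e is not in N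
  have hnotN : ∀ v, v ∈ e → v ∉ N := by
    intro v hv hvN
    rw [hN] at hvN
    obtain ⟨f, hf, hvf⟩ := hvN
    have hef : e ≠ f := fun h => hne (h ▸ Or.inl hf)
    exact hdis'' e he f (hsub (Or.inl hf)) hef v hv hvf
  -- each vertex of e is not in any edge of image M'
  have hnotImg : ∀ v, v ∈ e → ∀ f ∈ (Sym2.map (Subtype.val : W → V) '' M'), v ∉ f := by
    intro v hv f hf
    have hef : e ≠ f := fun h => hne (h ▸ Or.inr hf)
    exact hdis'' e he f (hsub (Or.inr hf)) hef v hv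
  revert he hne hnotN hnotImg
  induction e using Sym2.ind with
  | _ u v =>
    intro he hne hnotN hnotImg
    have hadj : G.Adj u v := hsub'' he
    have huN : u ∉ N := hnotN u (Sym2.mem_mk_left u v)
    have hvN : v ∉ N := hnotN v (Sym2.mem_mk_right u v)
    have huW : u ∈ W := by
      rw [hW]
      rintro (h | h)
      · exact huN h
      · rw [hN'] at h
        exact hvN (h.2 v hadj)
    have hvW : v ∈ W := by
      rw [hW]
      rintro (h | h)
      · exact hvN h
      · rw [hN'] at h
        exact huN (h.2 u hadj.symm)
    set u' : W := ⟨u, huW⟩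
    set v' : W := ⟨v, hvW⟩
    have hadj' : (G.induce W).Adj u' v' := hadj
    have he0map : Sym2.map (Subtype.val : W → V) s(u', v') = s(u, v) := rfl
    have hnew : IsMatching (G.induce W) (M' ∪ {s(u', v')}) := by
      constructor
      · rintro f (hf | hf)
        · exact hM'sub hf
        · rw [Set.mem_singleton_iff] at hf
          subst hf
          exact hadj'
      · rintro f (hf | hf) g (hg | hg) hfg w hw hwg
        · exact hM'dis f hf g hg hfg w hw hwg
        · rw [Set.mem_singleton_iff] at hg; subst hg
          have : (w : V) ∈ s(u, v) := by
            rw [← he0map]; exact Sym2.mem_map.mpr ⟨_, hwg, rfl⟩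
          exact hnotImg (w : V) this (Sym2.map Subtype.val f)
            ⟨f, hf, rfl⟩ (Sym2.mem_map.mpr ⟨_, hw, rfl⟩)
        · rw [Set.mem_singleton_iff] at hf; subst hf
          have : (w : V) ∈ s(u, v) := by
            rw [← he0map]; exact Sym2.mem_map.mpr ⟨_, hw, rfl⟩
          exact hnotImg (w : V) this (Sym2.map Subtype.val g)
            ⟨g, hg, rfl⟩ (Sym2.mem_map.mpr ⟨_, hwg, rfl⟩)
        · rw [Set.mem_singleton_iff] at hf hg
          exact hfg (hf.trans hg.symm)
    have := hM'max (M' ∪ {s(u', v')}) hnew Set.subset_union_left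
    have he0 : s(u', v') ∈ M' := by
      rw [this]; exact Or.inr rfl
    exact hne (Or.inr ⟨s(u', v'), he0, he0map⟩)
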